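/- Let V be a real Banach space, p ≥ 2, θ > 1, ε ≥ 0, and let ω be a control function. Let A^1, B^1 : Δ → V and A^2, B^2 : Δ → V ⊗ V (projective tensor norm) satisfy, for all 0 ≤ s ≤ u ≤ t ≤ 1: ‖A^1_{s,t}‖, ‖B^1_{s,t}‖ ≤ ω(s,t)^{1/p}; ‖A^1_{s,t} − B^1_{s,t}‖ ≤ ε ω(s,t)^{1/p}; ‖A^2_{s,t}‖, ‖B^2_{s,t}‖ ≤ ω(s,t)^{2/p}; ‖A^2_{s,t} − B^2_{s,t}‖ ≤ ε ω(s,t)^{2/p}; the first-level defect bounds ‖A^1_{s,t} − A^1_{s,u} − A^1_{u,t}‖ ≤ ω(s,t)^θ, ‖B^1_{s,t} − B^1_{s,u} − B^1_{u,t}‖ ≤ ω(s,t)^θ, ‖(A^1_{s,t} − A^1_{s,u} − A^1_{u,t}) − (B^1_{s,t} − B^1_{s,u} − B^1_{u,t})‖ ≤ ε ω(s,t)^θ; and the second-level defect bounds ‖A^2_{s,t} − A^2_{s,u} − A^2_{u,t} − A^1_{s,u} ⊗ A^1_{u,t}‖ ≤ ω(s,t)^θ, ‖B^2_{s,t} −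 B^2_{s,u} − B^2_{u,t} − B^1_{s,u} ⊗ B^1_{u,t}‖ ≤ ω(s,t)^θ, and ‖(A^2_{s,t} − A^2_{s,u} − A^2_{u,t} − A^1_{s,u} ⊗ A^1_{u,t}) − (B^2_{s,t} − B^2_{s,u} − B^2_{u,t} − B^1_{s,u} ⊗ B^1_{u,t})‖ ≤ ε ω(s,t)^θ. Suppose that for every (s,t) ∈ Δ the limits Â^1_{s,t} := lim_{|P|→0} Σ_i A^1_{t_{i−1},t_i}, B̂^1_{s,t} := lim_{|P|→0} Σ_i B^1_{t_{i−1},t_i}, Â^2_{s,t} := lim_{|P|→0} Σ_i (A^2_{t_{i−1},t_i} + Â^1_{s,t_{i−1}} ⊗ Â^1_{t_{i−1},t_i}), and B̂^2_{s,t} := lim_{|P|→0} Σ_i (B^2_{t_{i−1},t_i} + B̂^1_{s,t_{i−1}} ⊗ B̂^1_{t_{i−1},t_i}) (over finite partitions P = {s = t_0 < ⋯ < t_N = t} of [s,t] as the mesh tends to 0) exist. Then there exists a constant C > 0 depending only on p, θ and ω(0,1) such that for all (s,t) ∈ Δ, ‖(Â^2_{s,t} − A^2_{s,t}) − (B̂^2_{s,t}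 − B^2_{s,t})‖ ≤ ε C ω(s,t)^θ, and consequently ‖Â^2_{s,t} − B̂^2_{s,t}‖ ≤ ε C ω(s,t)^{2/p}. -/

import Mathlib

/-!
Young's maximal inequality: in a partition of `[s, t]` into `N` intervals some interior point can
be dropped at cost `ω(t_j, t_{j+2})^θ ≤ (2 ω(s,t)/(N-1))^θ`, so every Riemann sum of a germ `T`
whose defect `T_{a,b} - T_{a,u} - T_{u,b}` is at most `K ω(a,b)^θ` stays within
`K ∑ₙ (2/n)^θ ω(s,t)^θ` of `T_{s,t}`. This is applied to `A¹`, `B¹`, `A¹ - B¹`, and then to the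
difference of the second-level germs `A²_{a,b} + Â¹_{s,a} ⊗ Â¹_{a,b}` and their `B` analogues:
since `Â¹` is additive, the defect of that difference is `(δA² - A¹ ⊗ A¹) - (δB² - B¹ ⊗ B¹)` plus
the mismatch between `A¹ ⊗ A¹ - Â¹ ⊗ Â¹` and its `B` analogue, which is `ε`-small because both
`Â¹ - A¹` and `B̂¹ - B¹` are `O(ω^θ)` and differ by `O(ε ω^θ)`.
-/

open scoped TensorProduct

universe u

/-- A finite partition of the interval `[s,t]`: monotone points `pt 0 = s ≤ ⋯ ≤ pt N = t`. -/
structure Subdivision (s t : ℝ) where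
  N : ℕ
  pt : ℕ → ℝ
  pos : 0 < N
  first : pt 0 = s
  last : pt N = t
  mono : ∀ i, i < N → pt i ≤ pt (i + 1)

/-- The mesh of a partition: the largest length of a subinterval. -/
noncomputable def Subdivision.mesh {s t : ℝ} (P : Subdivision s t) : ℝ :=
  (Finset.range P.N).sup' (Finset.nonempty_range_iff.mpr P.pos.ne')
    (fun i => P.pt (i + 1) - P.pt i)

/-- A control function on the simplex `Δ = {0 ≤ s ≤ t ≤ 1}`. -/
def IsControl (ω : ℝ → ℝ → ℝ) : Prop :=
  ContinuousOn (fun p : ℝ × ℝ => ω p.1 p.2) {p : ℝ × ℝ | 0 ≤ p.1 ∧ p.1 ≤ p.2 ∧ p.2 ≤ 1} ∧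
  (∀ t, 0 ≤ t → t ≤ 1 → ω t t = 0) ∧
  (∀ s t, 0 ≤ s → s ≤ t → t ≤ 1 → 0 ≤ ω s t) ∧
  (∀ s u t, 0 ≤ s → s ≤ u → u ≤ t → t ≤ 1 → ω s u + ω u t ≤ ω s t)

/-- `V ⊗ V` with the projective tensor seminorm, realized as the 2-fold tensor power. -/
abbrev TensorSq (V : Type u) [NormedAddCommGroup V] [NormedSpace ℝ V] :=
  ⨂[ℝ] _ : Fin 2, V

/-- The elementary tensor `a ⊗ b` in `V ⊗ V`. -/
noncomputable def otimes {V : Type u} [NormedAddCommGroup V] [NormedSpace ℝ V] (a b : V) :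
    TensorSq V :=
  PiTensorProduct.tprod ℝ ![a, b]

/-- The projective tensor seminorm on `V ⊗ V`. -/
noncomputable def projSN {V : Type u} [NormedAddCommGroup V] [NormedSpace ℝ V]
    (x : TensorSq V) : ℝ :=
  PiTensorProduct.projectiveSeminorm x

/-- `L = lim_{|P| → 0} ∑_i A_{t_{i−1}, t_i}` over finite partitions `P` of `[s,t]` (`V`-valued). -/
def PartSumLimit {V : Type u} [NormedAddCommGroup V]
    (A : ℝ → ℝ → V) (s t : ℝ) (L : V) : Prop :=
  ∀ ε > (0 : ℝ), ∃ δ > (0 : ℝ), ∀ P : Subdivision s t, P.mesh < δ →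
    ‖(∑ i ∈ Finset.range P.N, A (P.pt i) (P.pt (i + 1))) - L‖ ≤ ε

/-- `L = lim_{|P| → 0} ∑_i (A²_{t_{i−1},t_i} + Â¹_{s,t_{i−1}} ⊗ Â¹_{t_{i−1},t_i})` in the
projective seminorm, over finite partitions `P` of `[s,t]`. -/
def PartSumLimit2 {V : Type u} [NormedAddCommGroup V] [NormedSpace ℝ V]
    (A2 : ℝ → ℝ → TensorSq V) (A1hat : ℝ → ℝ → V) (s t : ℝ) (L : TensorSq V) : Prop :=
  ∀ ε > (0 : ℝ), ∃ δ > (0 : ℝ), ∀ P : Subdivision s t, P.mesh < δ →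
    projSN ((∑ i ∈ Finset.range P.N,
        (A2 (P.pt i) (P.pt (i + 1)) + otimes (A1hat s (P.pt i)) (A1hat (P.pt i) (P.pt (i + 1)))))
      - L) ≤ ε

open Filter Topology Finset

def defect {E : Type*} [AddCommGroup E] (A : ℝ → ℝ → E) (a u b : ℝ) : E := A a b - A a u - A u b

lemma defect_sub {E : Type*} [AddCommGroup E] (A B : ℝ → ℝ → E) (a u b : ℝ) :
    defect (fun x y => A x y - B x y) a u b = defect A a u b - defect B a u b := by
  simp only [defect]
  abel

lemma eq_zero_of_additive {G : Type*} [AddGroup G] {A : ℝ → ℝ → G} {x : ℝ} (hx : 0 ≤ x)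
    (hx' : x ≤ 1) (hA : ∀ x y z, 0 ≤ x → x ≤ y → y ≤ z → z ≤ 1 → A x z = A x y + A y z) : A x x = 0 :=
  left_eq_add.1 (hA x x x hx le_rfl le_rfl hx')

namespace Subdivision

variable {s t u : ℝ}

lemma pt_monotoneOn (P : Subdivision s t) : MonotoneOn P.pt (Set.Iic P.N) :=
  monotoneOn_of_le_succ Set.ordConnected_Iic fun i _ _ hi => P.mono i (Nat.succ_le_iff.mp hi)

lemma pt_le_pt (P : Subdivision s t) {i j : ℕ} (hij : i ≤ j) (hj : j ≤ P.N) : P.pt i ≤ P.pt j :=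
  P.pt_monotoneOn (Set.mem_Iic.2 (hij.trans hj)) (Set.mem_Iic.2 hj) hij

lemma left_le_pt (P : Subdivision s t) {i : ℕ} (hi : i ≤ P.N) : s ≤ P.pt i :=
  P.first.symm.le.trans (P.pt_le_pt i.zero_le hi)

lemma pt_le_right (P : Subdivision s t) {i : ℕ} (hi : i ≤ P.N) : P.pt i ≤ t :=
  (P.pt_le_pt hi le_rfl).trans P.last.le

lemma left_le_right (P : Subdivision s t) : s ≤ t :=
  (P.left_le_pt le_rfl).trans (P.pt_le_right le_rfl)

lemma sub_le_mesh (P : Subdivision s t) {i : ℕ} (hi : i < P.N) : P.pt (i + 1) - P.pt i ≤ P.mesh :=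
  Finset.le_sup' (fun i => P.pt (i + 1) - P.pt i) (Finset.mem_range.2 hi)

lemma mesh_le {P : Subdivision s t} {δ : ℝ} (h : ∀ i < P.N, P.pt (i + 1) - P.pt i ≤ δ) :
    P.mesh ≤ δ :=
  Finset.sup'_le _ _ fun i hi => h i (Finset.mem_range.1 hi)

lemma mesh_nonneg (P : Subdivision s t) : 0 ≤ P.mesh :=
  (sub_nonneg.2 (P.mono 0 P.pos)).trans (P.sub_le_mesh P.pos)

def sum {E : Type*} [AddCommMonoid E] (P : Subdivision s t) (T : ℝ → ℝ → E) : E :=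
  ∑ i ∈ range P.N, T (P.pt i) (P.pt (i + 1))

lemma sum_sub {E : Type*} [AddCommGroup E] (P : Subdivision s t) (T T' : ℝ → ℝ → E) :
    P.sum (fun a b => T a b - T' a b) = P.sum T - P.sum T' :=
  Finset.sum_sub_distrib _ _

noncomputable def uniform (hst : s ≤ t) (n : ℕ) (hn : 0 < n) : Subdivision s t where
  N := n
  pt i := s + i * (t - s) / n
  pos := hn
  first := by simp
  last := by field_simp; ring
  mono i _ := by
    have : 0 ≤ t - s := sub_nonneg.2 hst
    gcongr
    simp

lemma mesh_uniform_le (hst : s ≤ t) (n : ℕ) (hn : 0 < n) : (uniform hst n hn).mesh ≤ (t - s) / n :=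
  mesh_le fun i _ => le_of_eq <| by simp only [uniform]; push_cast; ring

lemma exists_mesh_lt (hst : s ≤ t) {δ : ℝ} (hδ : 0 < δ) : ∃ P : Subdivision s t, P.mesh < δ := by
  obtain ⟨n, hn⟩ := exists_nat_gt ((t - s) / δ)
  have hn0 : 0 < n := by
    have : 0 ≤ (t - s) / δ := div_nonneg (sub_nonneg.2 hst) hδ.le
    exact_mod_cast this.trans_lt hn
  refine ⟨uniform hst n hn0, (mesh_uniform_le hst n hn0).trans_lt ?_⟩
  rwa [div_lt_iff₀ (by exact_mod_cast hn0), mul_comm, ← div_lt_iff₀ hδ]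

def append (P : Subdivision s u) (Q : Subdivision u t) : Subdivision s t where
  N := P.N + Q.N
  pt j := if j ≤ P.N then P.pt j else Q.pt (j - P.N)
  pos := by have := P.pos; omega
  first := by simp [P.first]
  last := by
    have := Q.pos
    simp only [show ¬ P.N + Q.N ≤ P.N by omega, if_false, Nat.add_sub_cancel_left, Q.last]
  mono j hj := by
    rcases lt_trichotomy j P.N with h | rfl | h
    · simp only [h.le, Nat.succ_le_of_lt h, if_true]; exact P.mono j h
    · simp only [le_rfl, if_true, show ¬ P.N + 1 ≤ P.N by omega, if_false, Nat.add_sub_cancel_left]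
      rw [P.last]; exact Q.first.symm.le.trans (Q.mono 0 Q.pos)
    · simp only [show ¬ j ≤ P.N by omega, show ¬ j + 1 ≤ P.N by omega, if_false,
        show j + 1 - P.N = j - P.N + 1 by omega]
      exact Q.mono _ (by omega)

lemma append_pt_add (P : Subdivision s u) (Q : Subdivision u t) (j : ℕ) :
    (P.append Q).pt (P.N + j) = Q.pt j := by
  rcases j with _ | j
  · simp [append, P.last, Q.first]
  · simp [append]

lemma append_pt_of_le (P : Subdivision s u) (Q : Subdivision u t) {j : ℕ} (hj : j ≤ P.N) :
    (P.append Q).pt j = P.pt j :=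
  if_pos hj

lemma mesh_append (P : Subdivision s u) (Q : Subdivision u t) :
    (P.append Q).mesh ≤ max P.mesh Q.mesh := by
  refine mesh_le fun j hj => ?_
  rcases lt_or_ge j P.N with h | h
  · rw [append_pt_of_le P Q h, append_pt_of_le P Q h.le]
    exact (P.sub_le_mesh h).trans (le_max_left _ _)
  · obtain ⟨k, rfl⟩ := Nat.exists_eq_add_of_le h
    rw [add_assoc, append_pt_add, append_pt_add]
    exact (Q.sub_le_mesh (by change _ < P.N + Q.N at hj; omega)).trans (le_max_right _ _)

lemma sum_append {E : Type*} [AddCommMonoid E] (P : Subdivision s u) (Q : Subdivision u t)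
    (T : ℝ → ℝ → E) : (P.append Q).sum T = P.sum T + Q.sum T := by
  change ∑ j ∈ range (P.N + Q.N), _ = _
  simp only [Finset.sum_range_add, add_assoc, append_pt_add]
  congr 1
  exact Finset.sum_congr rfl fun j hj => by
    rw [append_pt_of_le P Q (Finset.mem_range.1 hj).le, append_pt_of_le P Q (Finset.mem_range.1 hj)]

/-- Deletes the point `t_{j+1}` (not `t_j`). -/
def erase (P : Subdivision s t) (j : ℕ) (hj : j + 2 ≤ P.N) : Subdivision s t where
  N := P.N - 1
  pt k := if k ≤ j then P.pt k else P.pt (k + 1)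
  pos := by omega
  first := by simp [P.first]
  last := by simp only [show ¬ P.N - 1 ≤ j by omega, if_false, Nat.sub_add_cancel P.pos, P.last]
  mono k hk := by
    rcases lt_trichotomy k j with h | rfl | h
    · simp only [h.le, Nat.succ_le_of_lt h, if_true]; exact P.mono k (by omega)
    · simp only [le_rfl, show ¬ k + 1 ≤ k by omega, if_true, if_false]
      exact P.pt_le_pt (by omega) (by omega)
    · simp only [show ¬ k ≤ j by omega, show ¬ k + 1 ≤ j by omega, if_false]
      exact P.mono (k + 1) (by omega)

lemma sum_erase {E : Type*} [AddCommGroup E] (P : Subdivision s t) (j : ℕ) (hj : j + 2 ≤ P.N)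
    (T : ℝ → ℝ → E) :
    P.sum T = (P.erase j hj).sum T - defect T (P.pt j) (P.pt (j + 1)) (P.pt (j + 2)) := by
  obtain ⟨m, hm⟩ := Nat.exists_eq_add_of_le hj
  set Q := P.erase j hj
  have hQ : ∀ k, Q.pt k = if k ≤ j then P.pt k else P.pt (k + 1) := fun _ => rfl
  have hP : P.sum T = ∑ k ∈ range j, T (P.pt k) (P.pt (k + 1)) + T (P.pt j) (P.pt (j + 1))
      + T (P.pt (j + 1)) (P.pt (j + 2))
      + ∑ k ∈ range m, T (P.pt (j + 2 + k)) (P.pt (j + 2 + k + 1)) := by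
    simp only [sum, hm, Finset.sum_range_add, Finset.sum_range_succ]
  have hQsum : Q.sum T = ∑ k ∈ range j, T (P.pt k) (P.pt (k + 1)) + T (P.pt j) (P.pt (j + 2))
      + ∑ k ∈ range m, T (P.pt (j + 2 + k)) (P.pt (j + 2 + k + 1)) := by
    have hN : Q.N = j + 1 + m := by change P.N - 1 = _; omega
    simp only [sum, hN, Finset.sum_range_add, Finset.sum_range_succ]
    refine congrArg₂ (· + ·) (congrArg₂ (· + ·) ?_ ?_) ?_
    · exact Finset.sum_congr rfl fun k hk => by
        have := Finset.mem_range.1 hk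
        rw [hQ, hQ, if_pos (by omega), if_pos (by omega)]
    · rw [hQ, hQ, if_pos le_rfl, if_neg (by omega)]
    · exact Finset.sum_congr rfl fun k _ => by
        rw [hQ, hQ, if_neg (by omega), if_neg (by omega)]
        congr 2 <;> omega
  rw [hP, hQsum, defect]
  abel

noncomputable def fine (s t : ℝ) : Filter (Subdivision s t) := comap mesh (𝓝 0)

lemma hasBasis_fine : (fine s t).HasBasis (fun δ : ℝ => 0 < δ) fun δ => {P | P.mesh < δ} := by
  refine (Metric.nhds_basis_ball.comap mesh).congr (fun _ => Iff.rfl) fun δ _ => ?_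
  ext P
  simp [abs_of_nonneg P.mesh_nonneg]

lemma fine_neBot (hst : s ≤ t) : (fine s t).NeBot :=
  hasBasis_fine.neBot_iff.2 fun hδ => exists_mesh_lt hst hδ

lemma tendsto_fine_iff {E : Type*} [SeminormedAddCommGroup E] {S : Subdivision s t → E} {L : E} :
    Tendsto S (fine s t) (𝓝 L) ↔
      ∀ ε > 0, ∃ δ > 0, ∀ P : Subdivision s t, P.mesh < δ → ‖S P - L‖ ≤ ε := by
  simp [hasBasis_fine.tendsto_iff Metric.nhds_basis_closedBall, dist_eq_norm]

lemma tendsto_append :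
    Tendsto (fun PQ : Subdivision s u × Subdivision u t => PQ.1.append PQ.2)
      (fine s u ×ˢ fine u t) (fine s t) := by
  refine tendsto_comap_iff.2 <| tendsto_of_tendsto_of_tendsto_of_le_of_le tendsto_const_nhds
    ?_ (fun PQ => mesh_nonneg _) fun PQ => mesh_append PQ.1 PQ.2
  have h₁ : Tendsto mesh (fine s u) (𝓝 0) := tendsto_comap
  have h₂ : Tendsto mesh (fine u t) (𝓝 0) := tendsto_comap
  simpa using (h₁.comp tendsto_fst).max (h₂.comp tendsto_snd)

end Subdivision

namespace IsControl
variable {ω : ℝ → ℝ → ℝ}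

lemma nonneg (hω : IsControl ω) {a b : ℝ} (ha : 0 ≤ a) (hab : a ≤ b) (hb : b ≤ 1) : 0 ≤ ω a b :=
  hω.2.2.1 a b ha hab hb

lemma apply_self (hω : IsControl ω) {a : ℝ} (ha : 0 ≤ a) (ha' : a ≤ 1) : ω a a = 0 :=
  hω.2.1 a ha ha'

lemma superadditive (hω : IsControl ω) {a u b : ℝ} (ha : 0 ≤ a) (hau : a ≤ u) (hub : u ≤ b)
    (hb : b ≤ 1) : ω a u + ω u b ≤ ω a b :=
  hω.2.2.2 a u b ha hau hub hb

lemma mono (hω : IsControl ω) {a b a' b' : ℝ} (ha' : 0 ≤ a') (ha : a' ≤ a) (hab : a ≤ b)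
    (hb : b ≤ b') (hb' : b' ≤ 1) : ω a b ≤ ω a' b' := by
  have h₁ := hω.superadditive ha' ha hab (hb.trans hb')
  have h₂ := hω.superadditive ha' (ha.trans hab) hb hb'
  linarith [hω.nonneg ha' ha (hab.trans (hb.trans hb')),
    hω.nonneg (ha'.trans (ha.trans hab)) hb hb']

lemma rpow_mono (hω : IsControl ω) {θ a b a' b' : ℝ} (hθ : 0 ≤ θ) (ha' : 0 ≤ a') (ha : a' ≤ a)
    (hab : a ≤ b) (hb : b ≤ b') (hb' : b' ≤ 1) : ω a b ^ θ ≤ ω a' b' ^ θ :=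
  Real.rpow_le_rpow (hω.nonneg (ha'.trans ha) hab (hb.trans hb')) (hω.mono ha' ha hab hb hb') hθ

lemma sum_le (hω : IsControl ω) {c : ℕ → ℝ} {m : ℕ} (hc : MonotoneOn c (Set.Iic m)) (h0 : 0 ≤ c 0)
    (hm : c m ≤ 1) : ∑ k ∈ range m, ω (c k) (c (k + 1)) ≤ ω (c 0) (c m) := by
  induction m with
  | zero => simp [hω.apply_self h0 hm]
  | succ m ih =>
    have hmono : c m ≤ c (m + 1) := hc (by simp) (by simp) m.le_succ
    rw [Finset.sum_range_succ]
    have := hω.superadditive h0 (hc (by simp) (by simp) m.zero_le) hmono hm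
    linarith [ih (hc.mono (Set.Iic_subset_Iic.2 m.le_succ)) (hmono.trans hm)]

lemma exists_erase_le (hω : IsControl ω) {s t : ℝ} (hs : 0 ≤ s) (ht : t ≤ 1) (P : Subdivision s t)
    (hN : 2 ≤ P.N) :
    ∃ j, j + 2 ≤ P.N ∧ ((P.N - 1 : ℕ) : ℝ) * ω (P.pt j) (P.pt (j + 2)) ≤ 2 * ω s t := by
  set m := P.N / 2
  have hm : 0 < m := by omega
  -- the intervals `[t_{2k}, t_{2k+2}]`, `k < m`, are disjoint, so one of them has `m ω ≤ ω(s,t)`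
  have hchain : ∑ k ∈ range m, ω (P.pt (2 * k)) (P.pt (2 * k + 2)) ≤ ∑ _k ∈ range m, ω s t / m := by
    rw [Finset.sum_const, card_range, nsmul_eq_mul, mul_div_cancel₀ _ (by positivity)]
    calc ∑ k ∈ range m, ω (P.pt (2 * k)) (P.pt (2 * k + 2))
        ≤ ω (P.pt (2 * 0)) (P.pt (2 * m)) :=
          hω.sum_le (c := fun k => P.pt (2 * k)) (fun i hi k hk hik => P.pt_le_pt (by omega)
            (by simp only [Set.mem_Iic] at hk; omega)) (by simpa [P.first] using hs)
            ((P.pt_le_right (by omega)).trans ht)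
      _ ≤ ω s t := hω.mono hs (by simp [P.first]) (P.pt_le_pt (by omega) (by omega))
            (P.pt_le_right (by omega)) ht
  obtain ⟨k, hk, hle⟩ := Finset.exists_le_of_sum_le (nonempty_range_iff.2 hm.ne') hchain
  have hk := Finset.mem_range.1 hk
  refine ⟨2 * k, by omega, ?_⟩
  have hω₀ : 0 ≤ ω (P.pt (2 * k)) (P.pt (2 * k + 2)) := hω.nonneg
    (hs.trans (P.left_le_pt (by omega))) (P.pt_le_pt (by omega) (by omega))
    ((P.pt_le_right (by omega)).trans ht)
  have hcast : ((P.N - 1 : ℕ) : ℝ) ≤ 2 * m := by norm_cast; omega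
  rw [le_div_iff₀ (by positivity)] at hle
  nlinarith

end IsControl

noncomputable def sewingConst (θ : ℝ) : ℝ := ∑' n : ℕ, (2 / ((n : ℝ) + 1)) ^ θ

lemma summable_sewingConst {θ : ℝ} (hθ : 1 < θ) :
    Summable fun n : ℕ => (2 / ((n : ℝ) + 1)) ^ θ := by
  have h := ((summable_nat_add_iff 1).2 (Real.summable_one_div_nat_rpow.2 hθ)).mul_left (2 ^ θ)
  refine h.congr fun n => ?_
  rw [Real.div_rpow zero_le_two (by positivity), mul_one_div]
  push_cast
  rfl

lemma sewingConst_nonneg (θ : ℝ) : 0 ≤ sewingConst θ :=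
  tsum_nonneg fun _ => by positivity

section Sewing
variable {E : Type*} [SeminormedAddCommGroup E] {ω : ℝ → ℝ → ℝ} {θ K s t : ℝ} {T : ℝ → ℝ → E}

theorem norm_sum_sub_le_of_defect (hω : IsControl ω) (hθ : 0 ≤ θ) (hK : 0 ≤ K) (hs : 0 ≤ s)
    (ht : t ≤ 1) (hT : ∀ a u b, s ≤ a → a ≤ u → u ≤ b → b ≤ t → ‖defect T a u b‖ ≤ K * ω a b ^ θ)
    (P : Subdivision s t) :
    ‖P.sum T - T s t‖ ≤ K * (∑ k ∈ range (P.N - 1), (2 / ((k : ℝ) + 1)) ^ θ) * ω s t ^ θ := by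
  obtain ⟨n, hn⟩ : ∃ n, P.N = n + 1 := ⟨P.N - 1, by have := P.pos; omega⟩
  induction n generalizing P with
  | zero =>
    have h1 : P.pt 1 = t := by simpa [hn] using P.last
    simp [Subdivision.sum, hn, P.first, h1]
  | succ n ih =>
    obtain ⟨j, hj, hgood⟩ := hω.exists_erase_le hs ht P (by omega)
    have hωst := hω.nonneg hs P.left_le_right ht
    have hcost : ‖defect T (P.pt j) (P.pt (j + 1)) (P.pt (j + 2))‖
        ≤ K * ((2 / ((n : ℝ) + 1)) ^ θ * ω s t ^ θ) := by
      refine (hT _ _ _ (P.left_le_pt (by omega)) (P.pt_le_pt (by omega) (by omega))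
        (P.pt_le_pt (by omega) (by omega)) (P.pt_le_right (by omega))).trans ?_
      rw [← Real.mul_rpow (by positivity) hωst]
      gcongr
      · exact hω.nonneg (hs.trans (P.left_le_pt (by omega))) (P.pt_le_pt (by omega) (by omega))
          ((P.pt_le_right (by omega)).trans ht)
      · rw [hn, show n + 1 + 1 - 1 = n + 1 by omega] at hgood
        push_cast at hgood
        rw [div_mul_eq_mul_div, le_div_iff₀ (by positivity)]
        linarith
    have hN : (P.erase j hj).N = n + 1 := by change P.N - 1 = _; omega
    have hrest := ih (P.erase j hj) hN
    rw [hN, Nat.add_sub_cancel] at hrest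
    rw [P.sum_erase j hj, hn, show n + 1 + 1 - 1 = n + 1 by omega, Finset.sum_range_succ]
    calc ‖(P.erase j hj).sum T - defect T (P.pt j) (P.pt (j + 1)) (P.pt (j + 2)) - T s t‖
        ≤ ‖(P.erase j hj).sum T - T s t‖ + ‖defect T (P.pt j) (P.pt (j + 1)) (P.pt (j + 2))‖ := by
          rw [sub_right_comm]; exact norm_sub_le _ _
      _ ≤ _ := by
          refine (add_le_add hrest hcost).trans_eq ?_
          ring

lemma norm_sub_le_of_tendsto_fine (hst : s ≤ t)
    {S : Subdivision s t → E} {L T₀ : E} {M : ℝ} (hS : Tendsto S (Subdivision.fine s t) (𝓝 L))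
    (hM : ∀ P, ‖S P - T₀‖ ≤ M) : ‖L - T₀‖ ≤ M := by
  have := Subdivision.fine_neBot hst
  exact le_of_tendsto (hS.sub_const T₀).norm (Eventually.of_forall hM)

theorem norm_sub_le_of_tendsto_sum {L : E} (hω : IsControl ω) (hθ : 1 < θ) (hK : 0 ≤ K)
    (hs : 0 ≤ s) (hst : s ≤ t) (ht : t ≤ 1)
    (hT : ∀ a u b, s ≤ a → a ≤ u → u ≤ b → b ≤ t → ‖defect T a u b‖ ≤ K * ω a b ^ θ)
    (hL : Tendsto (·.sum T) (Subdivision.fine s t) (𝓝 L)) :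
    ‖L - T s t‖ ≤ K * sewingConst θ * ω s t ^ θ := by
  refine norm_sub_le_of_tendsto_fine hst hL fun P =>
    (norm_sum_sub_le_of_defect hω (by linarith) hK hs ht hT P).trans ?_
  have := hω.nonneg hs hst ht
  gcongr
  exact (summable_sewingConst hθ).sum_le_tsum _ fun _ _ => by positivity

end Sewing

section PartSumLimit
variable {E : Type*} [NormedAddCommGroup E] {A B : ℝ → ℝ → E} {s t : ℝ} {L L' : E}
  {ω : ℝ → ℝ → ℝ} {θ ε K : ℝ}

lemma partSumLimit_iff : PartSumLimit A s t L ↔ Tendsto (·.sum A) (Subdivision.fine s t) (𝓝 L) :=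
  Subdivision.tendsto_fine_iff.symm

lemma PartSumLimit.sub (hA : PartSumLimit A s t L) (hB : PartSumLimit B s t L') :
    PartSumLimit (fun x y => A x y - B x y) s t (L - L') := by
  rw [partSumLimit_iff] at *
  simpa only [Subdivision.sum_sub] using hA.sub hB

lemma additive_of_partSumLimit {Ahat : ℝ → ℝ → E}
    (hAhat : ∀ x y, 0 ≤ x → x ≤ y → y ≤ 1 → PartSumLimit A x y (Ahat x y))
    (x y z : ℝ) (hx : 0 ≤ x) (hxy : x ≤ y) (hyz : y ≤ z) (hz : z ≤ 1) :
    Ahat x z = Ahat x y + Ahat y z := by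
  have h₁ := partSumLimit_iff.1 (hAhat x y hx hxy (hyz.trans hz))
  have h₂ := partSumLimit_iff.1 (hAhat y z (hx.trans hxy) hyz hz)
  have h := partSumLimit_iff.1 (hAhat x z hx (hxy.trans hyz) hz)
  have := Subdivision.fine_neBot hxy
  have := Subdivision.fine_neBot hyz
  refine tendsto_nhds_unique (h.comp (Subdivision.tendsto_append (u := y))) ?_
  simp only [Function.comp_def, Subdivision.sum_append]
  exact (h₁.comp tendsto_fst).add (h₂.comp tendsto_snd)

theorem norm_sub_le_of_partSumLimit {Ahat : ℝ → ℝ → E}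
    (hω : IsControl ω) (hθ : 1 < θ) (hK : 0 ≤ K)
    (hA : ∀ a u b, 0 ≤ a → a ≤ u → u ≤ b → b ≤ 1 → ‖defect A a u b‖ ≤ K * ω a b ^ θ)
    (hAhat : ∀ x y, 0 ≤ x → x ≤ y → y ≤ 1 → PartSumLimit A x y (Ahat x y))
    (x y : ℝ) (hx : 0 ≤ x) (hxy : x ≤ y) (hy : y ≤ 1) :
    ‖Ahat x y - A x y‖ ≤ K * sewingConst θ * ω x y ^ θ :=
  norm_sub_le_of_tendsto_sum hω hθ hK hx hxy hy
    (fun a u b ha hau hub hb => hA a u b (hx.trans ha) hau hub (hb.trans hy))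
    (partSumLimit_iff.1 (hAhat x y hx hxy hy))

theorem firstLevel_comparison {A1 B1 A1hat B1hat : ℝ → ℝ → E}
    (hω : IsControl ω) (hθ : 1 < θ) (hε : 0 ≤ ε)
    (hdef : ∀ s u t, 0 ≤ s → s ≤ u → u ≤ t → t ≤ 1 →
      ‖A1 s t - A1 s u - A1 u t‖ ≤ ω s t ^ θ ∧ ‖B1 s t - B1 s u - B1 u t‖ ≤ ω s t ^ θ ∧
      ‖(A1 s t - A1 s u - A1 u t) - (B1 s t - B1 s u - B1 u t)‖ ≤ ε * ω s t ^ θ)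
    (hA1hat : ∀ s t, 0 ≤ s → s ≤ t → t ≤ 1 → PartSumLimit A1 s t (A1hat s t))
    (hB1hat : ∀ s t, 0 ≤ s → s ≤ t → t ≤ 1 → PartSumLimit B1 s t (B1hat s t))
    (x y : ℝ) (hx : 0 ≤ x) (hxy : x ≤ y) (hy : y ≤ 1) :
    ‖A1hat x y - A1 x y‖ ≤ sewingConst θ * ω x y ^ θ ∧
      ‖B1hat x y - B1 x y‖ ≤ sewingConst θ * ω x y ^ θ ∧
      ‖(A1hat x y - B1hat x y) - (A1 x y - B1 x y)‖ ≤ ε * sewingConst θ * ω x y ^ θ := by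
  refine ⟨?_, ?_, norm_sub_le_of_partSumLimit hω hθ hε
    (fun a u b ha hau hub hb => by rw [defect_sub]; exact (hdef a u b ha hau hub hb).2.2)
    (fun x y hx hxy hy => (hA1hat x y hx hxy hy).sub (hB1hat x y hx hxy hy)) x y hx hxy hy⟩
  · simpa using norm_sub_le_of_partSumLimit hω hθ zero_le_one
      (fun a u b ha hau hub hb => by rw [one_mul]; exact (hdef a u b ha hau hub hb).1) hA1hat
      x y hx hxy hy
  · simpa using norm_sub_le_of_partSumLimit hω hθ zero_le_one
      (fun a u b ha hau hub hb => by rw [one_mul]; exact (hdef a u b ha hau hub hb).2.1) hB1hat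
      x y hx hxy hy

end PartSumLimit

lemma update_vecCons_zero {α : Type*} (x a b : α) : Function.update ![a, b] 0 x = ![x, b] := by
  ext i; fin_cases i <;> rfl

lemma update_vecCons_one {α : Type*} (x a b : α) : Function.update ![a, b] 1 x = ![a, x] := by
  ext i; fin_cases i <;> rfl

section Tensor
variable {V : Type u} [NormedAddCommGroup V] [NormedSpace ℝ V]

lemma otimes_sub_left (a a' b : V) : otimes (a - a') b = otimes a b - otimes a' b := by
  simpa only [otimes, update_vecCons_zero] using
    (PiTensorProduct.tprod ℝ).map_update_sub ![a, b] 0 a a'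

lemma otimes_sub_right (a b b' : V) : otimes a (b - b') = otimes a b - otimes a b' := by
  simpa only [otimes, update_vecCons_one] using
    (PiTensorProduct.tprod ℝ).map_update_sub ![a, b] 1 b b'

lemma otimes_add_left (a a' b : V) : otimes (a + a') b = otimes a b + otimes a' b := by
  simpa only [otimes, update_vecCons_zero] using
    (PiTensorProduct.tprod ℝ).map_update_add ![a, b] 0 a a'

lemma otimes_add_right (a b b' : V) : otimes a (b + b') = otimes a b + otimes a b' := by
  simpa only [otimes, update_vecCons_one] using
    (PiTensorProduct.tprod ℝ).map_update_add ![a, b] 1 b b'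

lemma otimes_zero_left (b : V) : otimes 0 b = 0 :=
  (PiTensorProduct.tprod ℝ).map_coord_zero 0 (by simp)

lemma norm_otimes_le (a b : V) : ‖otimes a b‖ ≤ ‖a‖ * ‖b‖ := by
  unfold otimes
  simpa [Fin.prod_univ_two] using PiTensorProduct.projectiveSeminorm_tprod_le (𝕜 := ℝ) ![a, b]

lemma norm_otimes_comparison_le {a a' b b' x x' y y' : V} {ε κ D M : ℝ}
    (ha' : ‖(a' - b') - (a - b)‖ ≤ ε * κ) (hb : ‖b' - b‖ ≤ κ) (ha'b' : ‖a' - b'‖ ≤ ε * M)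
    (hb' : ‖b'‖ ≤ M) (hx : ‖x‖ ≤ D) (hxy : ‖x - y‖ ≤ ε * D) (hx' : ‖x' - x‖ ≤ κ)
    (hx'y' : ‖(x' - y') - (x - y)‖ ≤ ε * κ) :
    ‖(otimes a x - otimes a' x') - (otimes b y - otimes b' y')‖ ≤ ε * (2 * (D + M)) * κ := by
  have e : (otimes a x - otimes a' x') - (otimes b y - otimes b' y')
      = -(otimes ((a' - b') - (a - b)) x + otimes (b' - b) (x - y) + otimes (a' - b') (x' - x)
        + otimes b' ((x' - y') - (x - y))) := by
    simp only [otimes_sub_left, otimes_sub_right]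
    abel
  have hbound : ∀ {v w : V} {α β : ℝ}, ‖v‖ ≤ α → ‖w‖ ≤ β → ‖otimes v w‖ ≤ α * β :=
    fun hv hw => (norm_otimes_le _ _).trans
      (mul_le_mul hv hw (norm_nonneg _) ((norm_nonneg _).trans hv))
  rw [e, norm_neg]
  refine norm_add₄_le.trans ?_
  linarith [hbound ha' hx, hbound hb hxy, hbound ha'b' hx', hbound hb' hx'y']

noncomputable def secondLevelGerm (A2 : ℝ → ℝ → TensorSq V) (Ahat : ℝ → ℝ → V) (s : ℝ) :
    ℝ → ℝ → TensorSq V :=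
  fun a b => A2 a b + otimes (Ahat s a) (Ahat a b)

lemma defect_secondLevelGerm (A2 : ℝ → ℝ → TensorSq V) {Ahat : ℝ → ℝ → V} {s a u b : ℝ}
    (hab : Ahat a b = Ahat a u + Ahat u b) (hsu : Ahat s u = Ahat s a + Ahat a u) :
    defect (secondLevelGerm A2 Ahat s) a u b = defect A2 a u b - otimes (Ahat a u) (Ahat u b) := by
  simp only [defect, secondLevelGerm, hab, hsu, otimes_add_left, otimes_add_right]
  abel

end Tensor

lemma firstLevel_uniform_bounds {E : Type*} [SeminormedAddCommGroup E] {ω : ℝ → ℝ → ℝ}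
    {θ ε κ α d : ℝ} {A1 B1 A1hat B1hat : ℝ → ℝ → E} (hω : IsControl ω) (hθ : 0 ≤ θ) (hε : 0 ≤ ε)
    (hκ : 0 ≤ κ) (hα : 0 ≤ α) (hωd : ∀ x y, 0 ≤ x → x ≤ y → y ≤ 1 → ω x y ≤ d)
    (hsup : ∀ x y, 0 ≤ x → x ≤ y → y ≤ 1 →
      ‖A1 x y‖ ≤ ω x y ^ α ∧ ‖B1 x y‖ ≤ ω x y ^ α ∧ ‖A1 x y - B1 x y‖ ≤ ε * ω x y ^ α)
    (hfirst : ∀ x y, 0 ≤ x → x ≤ y → y ≤ 1 →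
      ‖A1hat x y - A1 x y‖ ≤ κ * ω x y ^ θ ∧ ‖B1hat x y - B1 x y‖ ≤ κ * ω x y ^ θ ∧
      ‖(A1hat x y - B1hat x y) - (A1 x y - B1 x y)‖ ≤ ε * κ * ω x y ^ θ)
    (x y : ℝ) (hx : 0 ≤ x) (hxy : x ≤ y) (hy : y ≤ 1) :
    ‖A1 x y‖ ≤ d ^ α ∧ ‖A1 x y - B1 x y‖ ≤ ε * d ^ α ∧ ‖B1hat x y‖ ≤ d ^ α + κ * d ^ θ ∧
      ‖A1hat x y - B1hat x y‖ ≤ ε * (d ^ α + κ * d ^ θ) := by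
  obtain ⟨hA, hB, hAB⟩ := hsup x y hx hxy hy
  obtain ⟨-, hB', hAB'⟩ := hfirst x y hx hxy hy
  have hα' : ω x y ^ α ≤ d ^ α := Real.rpow_le_rpow (hω.nonneg hx hxy hy) (hωd x y hx hxy hy) hα
  have hθ' : κ * ω x y ^ θ ≤ κ * d ^ θ := mul_le_mul_of_nonneg_left
    (Real.rpow_le_rpow (hω.nonneg hx hxy hy) (hωd x y hx hxy hy) hθ) hκ
  refine ⟨hA.trans hα', hAB.trans (mul_le_mul_of_nonneg_left hα' hε),
    (norm_le_norm_add_norm_sub' _ (B1 x y)).trans (by linarith),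
    (norm_le_norm_add_norm_sub' _ (A1 x y - B1 x y)).trans ?_⟩
  nlinarith

section SecondLevel
variable {V : Type u} [NormedAddCommGroup V] [NormedSpace ℝ V] {ω : ℝ → ℝ → ℝ} {θ ε κ α d s t : ℝ}
  {A1 B1 A1hat B1hat : ℝ → ℝ → V} {A2 B2 : ℝ → ℝ → TensorSq V} {A2hat B2hat : TensorSq V}

lemma partSumLimit2_iff : PartSumLimit2 A2 A1hat s t A2hat ↔
    Tendsto (·.sum (secondLevelGerm A2 A1hat s)) (Subdivision.fine s t) (𝓝 A2hat) := by
  rw [Subdivision.tendsto_fine_iff]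
  rfl

lemma norm_defect_secondLevelGerm_sub_le {a u b c₁ c₂ : ℝ}
    (hA : A1hat a b = A1hat a u + A1hat u b) (hA' : A1hat s u = A1hat s a + A1hat a u)
    (hB : B1hat a b = B1hat a u + B1hat u b) (hB' : B1hat s u = B1hat s a + B1hat a u)
    (h2 : ‖(defect A2 a u b - otimes (A1 a u) (A1 u b))
      - (defect B2 a u b - otimes (B1 a u) (B1 u b))‖ ≤ c₁)
    (hcross : ‖(otimes (A1 a u) (A1 u b) - otimes (A1hat a u) (A1hat u b))
      - (otimes (B1 a u) (B1 u b) - otimes (B1hat a u) (B1hat u b))‖ ≤ c₂) :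
    ‖defect (fun a b => secondLevelGerm A2 A1hat s a b - secondLevelGerm B2 B1hat s a b) a u b‖
      ≤ c₁ + c₂ := by
  rw [defect_sub, defect_secondLevelGerm A2 hA hA', defect_secondLevelGerm B2 hB hB']
  refine (norm_add_le_of_le h2 hcross).trans_eq' (congrArg _ ?_)
  abel

theorem norm_secondLevel_comparison_le (hω : IsControl ω) (hθ : 1 < θ) (hε : 0 ≤ ε) (hκ : 0 ≤ κ)
    (hα : 0 ≤ α) (hs : 0 ≤ s) (hst : s ≤ t) (ht : t ≤ 1)
    (hωd : ∀ x y, 0 ≤ x → x ≤ y → y ≤ 1 → ω x y ≤ d)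
    (hsup : ∀ x y, 0 ≤ x → x ≤ y → y ≤ 1 →
      ‖A1 x y‖ ≤ ω x y ^ α ∧ ‖B1 x y‖ ≤ ω x y ^ α ∧ ‖A1 x y - B1 x y‖ ≤ ε * ω x y ^ α)
    (hfirst : ∀ x y, 0 ≤ x → x ≤ y → y ≤ 1 →
      ‖A1hat x y - A1 x y‖ ≤ κ * ω x y ^ θ ∧ ‖B1hat x y - B1 x y‖ ≤ κ * ω x y ^ θ ∧
      ‖(A1hat x y - B1hat x y) - (A1 x y - B1 x y)‖ ≤ ε * κ * ω x y ^ θ)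
    (hA1add : ∀ x y z, 0 ≤ x → x ≤ y → y ≤ z → z ≤ 1 → A1hat x z = A1hat x y + A1hat y z)
    (hB1add : ∀ x y z, 0 ≤ x → x ≤ y → y ≤ z → z ≤ 1 → B1hat x z = B1hat x y + B1hat y z)
    (h2 : ∀ a u b, 0 ≤ a → a ≤ u → u ≤ b → b ≤ 1 →
      ‖(defect A2 a u b - otimes (A1 a u) (A1 u b))
        - (defect B2 a u b - otimes (B1 a u) (B1 u b))‖ ≤ ε * ω a b ^ θ)
    (hA2hat : PartSumLimit2 A2 A1hat s t A2hat) (hB2hat : PartSumLimit2 B2 B1hat s t B2hat) :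
    ‖(A2hat - B2hat) - (A2 s t - B2 s t)‖
      ≤ ε * (1 + 2 * (2 * d ^ α + κ * d ^ θ) * κ) * sewingConst θ * ω s t ^ θ := by
  have hd : 0 ≤ d := (hω.nonneg le_rfl le_rfl zero_le_one).trans (hωd 0 0 le_rfl le_rfl zero_le_one)
  have hbounds := firstLevel_uniform_bounds hω (by linarith) hε hκ hα hωd hsup hfirst
  have hdefect : ∀ a u b, s ≤ a → a ≤ u → u ≤ b → b ≤ t →
      ‖defect (fun a b => secondLevelGerm A2 A1hat s a b - secondLevelGerm B2 B1hat s a b) a u b‖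
        ≤ ε * (1 + 2 * (2 * d ^ α + κ * d ^ θ) * κ) * ω a b ^ θ := by
    intro a u b ha hau hub hb
    have ha0 := hs.trans ha
    have hu0 := ha0.trans hau
    have hb1 := hb.trans ht
    have hu1 := hub.trans hb1
    have hωau : κ * ω a u ^ θ ≤ κ * ω a b ^ θ :=
      mul_le_mul_of_nonneg_left (hω.rpow_mono (by linarith) ha0 le_rfl hau hub hb1) hκ
    have hωub : κ * ω u b ^ θ ≤ κ * ω a b ^ θ :=
      mul_le_mul_of_nonneg_left (hω.rpow_mono (by linarith) ha0 hau hub le_rfl hb1) hκ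
    obtain ⟨-, hBau, hdau⟩ := hfirst a u ha0 hau hu1
    obtain ⟨hAub, -, hdub⟩ := hfirst u b hu0 hub hb1
    obtain ⟨hA1ub, hAB1ub, -, -⟩ := hbounds u b hu0 hub hb1
    obtain ⟨-, -, hB1hat, hAB1hat⟩ := hbounds a u ha0 hau hu1
    refine (norm_defect_secondLevelGerm_sub_le (hA1add a u b ha0 hau hub hb1)
      (hA1add s a u hs ha hau hu1) (hB1add a u b ha0 hau hub hb1) (hB1add s a u hs ha hau hu1)
      (h2 a u b ha0 hau hub hb1) (norm_otimes_comparison_le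
        (hdau.trans (by rw [mul_assoc]; exact mul_le_mul_of_nonneg_left hωau hε))
        (hBau.trans hωau) hAB1hat hB1hat hA1ub hAB1ub (hAub.trans hωub)
        (hdub.trans (by rw [mul_assoc]; exact mul_le_mul_of_nonneg_left hωub hε)))).trans_eq ?_
    ring
  have hlim : Tendsto
      (·.sum fun a b => secondLevelGerm A2 A1hat s a b - secondLevelGerm B2 B1hat s a b)
      (Subdivision.fine s t) (𝓝 (A2hat - B2hat)) := by
    simpa only [Subdivision.sum_sub] using
      (partSumLimit2_iff.1 hA2hat).sub (partSumLimit2_iff.1 hB2hat)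
  have hs1 := hst.trans ht
  simpa [secondLevelGerm, eq_zero_of_additive hs hs1 hA1add, eq_zero_of_additive hs hs1 hB1add,
    otimes_zero_left] using norm_sub_le_of_tendsto_sum hω hθ (by positivity) hs hst ht hdefect hlim
end SecondLevel

lemma norm_le_of_norm_sub_le_rpow {E : Type*} [SeminormedAddCommGroup E] {x y : E}
    {ε K w d α θ : ℝ} (hε : 0 ≤ ε) (hK : 0 ≤ K) (hw : 0 ≤ w) (hwd : w ≤ d) (hα : α ≤ θ)
    (hθ : θ ≠ 0) (hxy : ‖x - y‖ ≤ ε * K * w ^ θ) (hy : ‖y‖ ≤ ε * w ^ α) :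
    ‖x‖ ≤ ε * (K * d ^ (θ - α) + 1) * w ^ α :=
  calc ‖x‖ ≤ ‖y‖ + ‖x - y‖ := norm_le_norm_add_norm_sub' x y
    _ ≤ ε * w ^ α + ε * K * (w ^ (θ - α) * w ^ α) := by
        rw [← Real.rpow_add' hw (by simpa using hθ), sub_add_cancel]
        exact add_le_add hy hxy
    _ ≤ ε * w ^ α + ε * K * (d ^ (θ - α) * w ^ α) := by gcongr
    _ = ε * (K * d ^ (θ - α) + 1) * w ^ α := by ring

/-- Second-level comparison of two almost rough paths with their associated
rough paths: there is `C > 0`, depending only on `p`, `θ` and `ω(0,1)`, such that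
`‖(Â²_{s,t} − A²_{s,t}) − (B̂²_{s,t} − B²_{s,t})‖ ≤ ε C ω(s,t)^θ` and consequently
`‖Â²_{s,t} − B̂²_{s,t}‖ ≤ ε C ω(s,t)^{2/p}`. -/
theorem statement15 (p θ : ℝ) (hp : 2 ≤ p) (hθ : 1 < θ) (c₀ : ℝ) :
    ∃ C : ℝ, 0 < C ∧
      ∀ (V : Type u) [NormedAddCommGroup V] [NormedSpace ℝ V] [CompleteSpace V],
      ∀ (ε : ℝ), 0 ≤ ε →
      ∀ (ω : ℝ → ℝ → ℝ), IsControl ω → ω 0 1 = c₀ →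
      ∀ (A1 B1 A1hat B1hat : ℝ → ℝ → V) (A2 B2 A2hat B2hat : ℝ → ℝ → TensorSq V),
        (∀ s t, 0 ≤ s → s ≤ t → t ≤ 1 →
          ‖A1 s t‖ ≤ ω s t ^ (1 / p) ∧ ‖B1 s t‖ ≤ ω s t ^ (1 / p) ∧
          ‖A1 s t - B1 s t‖ ≤ ε * ω s t ^ (1 / p) ∧
          projSN (A2 s t) ≤ ω s t ^ (2 / p) ∧ projSN (B2 s t) ≤ ω s t ^ (2 / p) ∧
          projSN (A2 s t - B2 s t) ≤ ε * ω s t ^ (2 / p)) →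
        (∀ s u t, 0 ≤ s → s ≤ u → u ≤ t → t ≤ 1 →
          ‖A1 s t - A1 s u - A1 u t‖ ≤ ω s t ^ θ ∧
          ‖B1 s t - B1 s u - B1 u t‖ ≤ ω s t ^ θ ∧
          ‖(A1 s t - A1 s u - A1 u t) - (B1 s t - B1 s u - B1 u t)‖ ≤ ε * ω s t ^ θ) →
        (∀ s u t, 0 ≤ s → s ≤ u → u ≤ t → t ≤ 1 →
          projSN (A2 s t - A2 s u - A2 u t - otimes (A1 s u) (A1 u t)) ≤ ω s t ^ θ ∧
          projSN (B2 s t - B2 s u - B2 u t - otimes (B1 s u) (B1 u t)) ≤ ω s t ^ θ ∧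
          projSN ((A2 s t - A2 s u - A2 u t - otimes (A1 s u) (A1 u t))
              - (B2 s t - B2 s u - B2 u t - otimes (B1 s u) (B1 u t))) ≤ ε * ω s t ^ θ) →
        (∀ s t, 0 ≤ s → s ≤ t → t ≤ 1 → PartSumLimit A1 s t (A1hat s t)) →
        (∀ s t, 0 ≤ s → s ≤ t → t ≤ 1 → PartSumLimit B1 s t (B1hat s t)) →
        (∀ s t, 0 ≤ s → s ≤ t → t ≤ 1 → PartSumLimit2 A2 A1hat s t (A2hat s t)) →
        (∀ s t, 0 ≤ s → s ≤ t → t ≤ 1 → PartSumLimit2 B2 B1hat s t (B2hat s t)) →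
        ∀ s t, 0 ≤ s → s ≤ t → t ≤ 1 →
          projSN ((A2hat s t - A2 s t) - (B2hat s t - B2 s t)) ≤ ε * C * ω s t ^ θ ∧
          projSN (A2hat s t - B2hat s t) ≤ ε * C * ω s t ^ (2 / p) := by
  set κ := sewingConst θ
  -- `d = ω(0,1)` bounds `ω` on `Δ`; the `max` only matters for `c₀ < 0`, when no such `ω` exists
  set d := max c₀ 0
  set K := (1 + 2 * (2 * d ^ (1 / p) + κ * d ^ θ) * κ) * κ
  have hκ : 0 ≤ κ := sewingConst_nonneg θ
  have hK : 0 ≤ K := by positivity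
  refine ⟨K * (1 + d ^ (θ - 2 / p)) + 1, by positivity, ?_⟩
  intro V _ _ _ ε hε ω hω hc₀ A1 B1 A1hat B1hat A2 B2 A2hat B2hat hbd hdef1 hdef2 hlA hlB hlA2 hlB2
    s t hs hst ht
  have hωd x y (hx : 0 ≤ x) (hxy : x ≤ y) (hy : y ≤ 1) : ω x y ≤ d :=
    (hω.mono le_rfl hx hxy hy le_rfl).trans (hc₀.le.trans (le_max_left _ _))
  have key : ‖(A2hat s t - B2hat s t) - (A2 s t - B2 s t)‖ ≤ ε * K * ω s t ^ θ :=
    (norm_secondLevel_comparison_le hω hθ hε hκ (by positivity) hs hst ht hωd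
      (fun x y hx hxy hy => ⟨(hbd x y hx hxy hy).1, (hbd x y hx hxy hy).2.1,
        (hbd x y hx hxy hy).2.2.1⟩)
      (firstLevel_comparison hω hθ hε hdef1 hlA hlB) (additive_of_partSumLimit hlA)
      (additive_of_partSumLimit hlB) (fun a u b ha hau hub hb => (hdef2 a u b ha hau hub hb).2.2)
      (hlA2 s t hs hst ht) (hlB2 s t hs hst ht)).trans_eq (by ring)
  have hω₀ := hω.nonneg hs hst ht
  have hKd : 0 ≤ K * d ^ (θ - 2 / p) := by positivity
  refine ⟨?_, ?_⟩
  · rw [show (A2hat s t - A2 s t) - (B2hat s t - B2 s t)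
      = (A2hat s t - B2hat s t) - (A2 s t - B2 s t) by abel]
    refine key.trans (mul_le_mul_of_nonneg_right ?_ (Real.rpow_nonneg hω₀ θ))
    gcongr
    linarith [mul_one_add K (d ^ (θ - 2 / p))]
  · refine (norm_le_of_norm_sub_le_rpow hε hK hω₀ (hωd s t hs hst ht) ?_ (by positivity) key
      (hbd s t hs hst ht).2.2.2.2.2).trans (mul_le_mul_of_nonneg_right ?_ (Real.rpow_nonneg hω₀ _))
    · rw [div_le_iff₀ (by positivity)]
      nlinarith
    · gcongr
      linarith [mul_one_add K (d ^ (θ - 2 / p))]
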